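/- Let A ∈ ℝ^{m×n} have full column rank, p ∈ (0, 2], ε > 0, and let w, z ∈ ℝ^m be entrywise positive with w ≈_ε σ(diag(w)^{1/2-1/p} A) + z. Let τ(A) ∈ ℝ^m be the (unique) entrywise-positive solution of the fixed-point equation τ = σ(diag(τ)^{1/2-1/p} A) + z (the z-regularized ℓ_p Lewis weights). Then w ≈_ε τ(A). -/

import Mathlib

/-!
Put `c = 2/p - 1 ≥ 0`. Multiplying the fixed-point equation by `u^c` turns it into
`u^{1+c} = F(u)` with `F(u)_i = a_iᵀ (Aᵀ U^{-c} A)⁻¹ a_i + z_i u_i^c`. If `u ≈_δ v` then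
`U^{-c} ≈_{cδ} V^{-c}`, so the weighted Gram matrices, and hence their inverses, agree up to
`e^{cδ}` in the Loewner order, and `F(u) ≈_{cδ} F(v)`. Taking for `δ` the multiplicative distance
between `w` and `τ` gives `w^{1+c} ≈_{ε+cδ} τ^{1+c}`, i.e. `(1+c) δ ≤ ε + c δ`, so `δ ≤ ε`.
-/

open Matrix

/-- `u ≈_δ v`: entrywise `e^{-δ} v ≤ u ≤ e^{δ} v`. -/
def Approx {m : ℕ} (δ : ℝ) (u v : Fin m → ℝ) : Prop :=
  ∀ i, Real.exp (-δ) * v i ≤ u i ∧ u i ≤ Real.exp δ * v i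

/-- Leverage scores `σ(M)_i = (M (MᵀM)⁻¹ Mᵀ)_{ii}`. -/
noncomputable def lev {m n : ℕ} (M : Matrix (Fin m) (Fin n) ℝ) : Fin m → ℝ :=
  fun i => (M * (Mᵀ * M)⁻¹ * Mᵀ) i i

/-- The row-rescaled matrix `W^{1/2 - 1/p} A` for `W = diag w`. -/
noncomputable def scaled {m n : ℕ} (w : Fin m → ℝ) (p : ℝ)
    (A : Matrix (Fin m) (Fin n) ℝ) : Matrix (Fin m) (Fin n) ℝ :=
  Matrix.diagonal (fun i => w i ^ ((1:ℝ)/2 - 1/p)) * A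

namespace Matrix

section InverseQuadraticForm

variable {n : Type*} [Fintype n] [DecidableEq n] {M N : Matrix n n ℝ}

theorem PosDef.two_mul_dotProduct_sub_le (hM : M.PosDef) (a x : n → ℝ) :
    2 * (a ⬝ᵥ x) - x ⬝ᵥ M *ᵥ x ≤ a ⬝ᵥ M⁻¹ *ᵥ a := by
  set t := M⁻¹ *ᵥ a
  have hMt : M *ᵥ t = a := by
    rw [mulVec_mulVec, mul_nonsing_inv _ hM.det_pos.ne'.isUnit, one_mulVec]
  have hsymm : t ⬝ᵥ M *ᵥ x = a ⬝ᵥ x := by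
    rw [dotProduct_mulVec, ← mulVec_transpose, ← conjTranspose_eq_transpose_of_trivial,
      hM.isHermitian.eq, hMt]
  have hsq := hM.posSemidef.dotProduct_mulVec_nonneg (x - t)
  rw [star_trivial, mulVec_sub, hMt, dotProduct_sub, sub_dotProduct, sub_dotProduct, hsymm,
    dotProduct_comm x a, dotProduct_comm t a] at hsq
  linarith

theorem PosDef.dotProduct_inv_mulVec_le (hM : M.PosDef) (hN : IsUnit N.det) {k : ℝ} (hk : 0 < k)
    (h : ∀ x, x ⬝ᵥ M *ᵥ x ≤ k * (x ⬝ᵥ N *ᵥ x)) (a : n → ℝ) :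
    a ⬝ᵥ N⁻¹ *ᵥ a ≤ k * (a ⬝ᵥ M⁻¹ *ᵥ a) := by
  set y := N⁻¹ *ᵥ a
  have hNy : N *ᵥ y = a := by rw [mulVec_mulVec, mul_nonsing_inv _ hN, one_mulVec]
  have hyMy : k⁻¹ * (y ⬝ᵥ M *ᵥ y) ≤ a ⬝ᵥ y := by
    rw [inv_mul_le_iff₀ hk, dotProduct_comm a, ← hNy]
    exact h y
  have hvar := hM.two_mul_dotProduct_sub_le a (k⁻¹ • y)
  simp only [dotProduct_smul, smul_dotProduct, mulVec_smul, smul_eq_mul] at hvar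
  have hbound : k⁻¹ * (a ⬝ᵥ y) ≤ a ⬝ᵥ M⁻¹ *ᵥ a := by
    nlinarith [mul_le_mul_of_nonneg_left hyMy (inv_nonneg.2 hk.le)]
  rwa [inv_mul_le_iff₀ hk] at hbound

end InverseQuadraticForm

section WeightedGram

variable {m n : Type*} [Fintype m] [Fintype n] [DecidableEq m]

theorem dotProduct_transpose_mul_diagonal_mul_mulVec (A : Matrix m n ℝ) (d : m → ℝ)
    (x : n → ℝ) : x ⬝ᵥ (Aᵀ * diagonal d * A) *ᵥ x = ∑ j, d j * (A *ᵥ x) j ^ 2 := by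
  rw [← mulVec_mulVec, ← mulVec_mulVec, dotProduct_mulVec, ← mulVec_transpose,
    transpose_transpose]
  simp only [dotProduct, mulVec_diagonal]
  exact Finset.sum_congr rfl fun j _ => by ring

theorem dotProduct_transpose_mul_diagonal_mul_mulVec_le (A : Matrix m n ℝ) {d e : m → ℝ}
    {k : ℝ} (h : ∀ j, d j ≤ k * e j) (x : n → ℝ) :
    x ⬝ᵥ (Aᵀ * diagonal d * A) *ᵥ x ≤ k * (x ⬝ᵥ (Aᵀ * diagonal e * A) *ᵥ x) := by
  simp only [dotProduct_transpose_mul_diagonal_mul_mulVec, Finset.mul_sum, ← mul_assoc]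
  exact Finset.sum_le_sum fun j _ => mul_le_mul_of_nonneg_right (h j) (sq_nonneg _)

theorem posDef_transpose_mul_diagonal_mul {A : Matrix m n ℝ} (hA : Function.Injective A.mulVec)
    {d : m → ℝ} (hd : ∀ j, 0 < d j) : (Aᵀ * diagonal d * A).PosDef := by
  simpa only [conjTranspose_eq_transpose_of_trivial] using
    (posDef_diagonal_iff.2 hd).conjTranspose_mul_mul_same hA

end WeightedGram

theorem mulVec_injective_of_rank_eq_card {m n K : Type*} [Fintype n] [Field K]
    {A : Matrix m n K} (h : A.rank = Fintype.card n) : Function.Injective A.mulVec := by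
  have hdim := A.mulVecLin.finrank_range_add_finrank_ker
  rw [show Module.finrank K (LinearMap.range A.mulVecLin) = A.rank from rfl, h,
    Module.finrank_fintype_fun_eq_card, Nat.add_eq_left] at hdim
  exact LinearMap.ker_eq_bot.mp (Submodule.finrank_eq_zero.mp hdim)

end Matrix

section Approx

variable {m : ℕ} {δ δ' : ℝ} {u v s t : Fin m → ℝ}

theorem approx_iff_le_exp_mul :
    Approx δ u v ↔ ∀ i, u i ≤ Real.exp δ * v i ∧ v i ≤ Real.exp δ * u i := by
  refine forall_congr' fun i => ?_
  rw [Real.exp_neg, inv_mul_le_iff₀ (Real.exp_pos δ), and_comm]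

theorem approx_iff_forall_abs_log_sub_le (hu : ∀ i, 0 < u i) (hv : ∀ i, 0 < v i) :
    Approx δ u v ↔ ∀ i, |Real.log (u i) - Real.log (v i)| ≤ δ := by
  refine forall_congr' fun i => ?_
  have hlow : Real.exp (-δ) * v i ≤ u i ↔ -δ + Real.log (v i) ≤ Real.log (u i) := by
    rw [Real.le_log_iff_exp_le (hu i), Real.exp_add, Real.exp_log (hv i)]
  have hupp : u i ≤ Real.exp δ * v i ↔ Real.log (u i) ≤ δ + Real.log (v i) := by
    rw [Real.log_le_iff_le_exp (hu i), Real.exp_add, Real.exp_log (hv i)]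
  rw [hlow, hupp, abs_sub_le_iff]
  constructor <;> rintro ⟨h₁, h₂⟩ <;> constructor <;> linarith

theorem Approx.mono (hv : ∀ i, 0 ≤ v i) (hδ : δ ≤ δ') (h : Approx δ u v) : Approx δ' u v :=
  fun i => ⟨(mul_le_mul_of_nonneg_right (Real.exp_le_exp.2 (neg_le_neg hδ)) (hv i)).trans (h i).1,
    (h i).2.trans (mul_le_mul_of_nonneg_right (Real.exp_le_exp.2 hδ) (hv i))⟩

theorem Approx.trans (h₁ : Approx δ u v) (h₂ : Approx δ' v t) : Approx (δ + δ') u t := by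
  intro i
  rw [neg_add, Real.exp_add, Real.exp_add, mul_assoc, mul_assoc]
  exact ⟨(mul_le_mul_of_nonneg_left (h₂ i).1 (Real.exp_pos _).le).trans (h₁ i).1,
    (h₁ i).2.trans (mul_le_mul_of_nonneg_left (h₂ i).2 (Real.exp_pos _).le)⟩

theorem Approx.add (h₁ : Approx δ u v) (h₂ : Approx δ s t) : Approx δ (u + s) (v + t) :=
  fun i => by
    simp only [Pi.add_apply, mul_add]
    exact ⟨add_le_add (h₁ i).1 (h₂ i).1, add_le_add (h₁ i).2 (h₂ i).2⟩

theorem Approx.mul_right (hs : ∀ i, 0 ≤ s i) (h : Approx δ u v) :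
    Approx δ (fun i => u i * s i) (fun i => v i * s i) :=
  fun i => by
    rw [← mul_assoc, ← mul_assoc]
    exact ⟨mul_le_mul_of_nonneg_right (h i).1 (hs i), mul_le_mul_of_nonneg_right (h i).2 (hs i)⟩

theorem Approx.rpow (hu : ∀ i, 0 < u i) (hv : ∀ i, 0 < v i) (h : Approx δ u v) (c : ℝ) :
    Approx (|c| * δ) (fun i => u i ^ c) (fun i => v i ^ c) := by
  rw [approx_iff_forall_abs_log_sub_le hu hv] at h
  rw [approx_iff_forall_abs_log_sub_le (fun i => Real.rpow_pos_of_pos (hu i) c)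
    (fun i => Real.rpow_pos_of_pos (hv i) c)]
  intro i
  rw [Real.log_rpow (hu i), Real.log_rpow (hv i), ← mul_sub, abs_mul]
  exact mul_le_mul_of_nonneg_left (h i) (abs_nonneg c)

theorem Approx.of_rpow (hu : ∀ i, 0 < u i) (hv : ∀ i, 0 < v i) {c : ℝ} (hc : 0 < c)
    (h : Approx δ (fun i => u i ^ c) (fun i => v i ^ c)) : Approx (δ / c) u v := by
  have hroot := h.rpow (fun i => Real.rpow_pos_of_pos (hu i) c)
    (fun i => Real.rpow_pos_of_pos (hv i) c) c⁻¹
  simp only [Real.rpow_rpow_inv (hu _).le hc.ne', Real.rpow_rpow_inv (hv _).le hc.ne',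
    abs_inv, abs_of_pos hc] at hroot
  rwa [div_eq_inv_mul]

end Approx

-- The supremum over `Fin 0` is `0`.
noncomputable def logDist {m : ℕ} (u v : Fin m → ℝ) : ℝ :=
  ⨆ i, |Real.log (u i) - Real.log (v i)|

section LogDist

variable {m : ℕ} {δ : ℝ} {u v : Fin m → ℝ}

theorem logDist_nonneg (u v : Fin m → ℝ) : 0 ≤ logDist u v :=
  Real.iSup_nonneg fun _ => abs_nonneg _

theorem approx_logDist (hu : ∀ i, 0 < u i) (hv : ∀ i, 0 < v i) : Approx (logDist u v) u v :=
  (approx_iff_forall_abs_log_sub_le hu hv).2 fun i =>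
    le_ciSup (Finite.bddAbove_range fun i => |Real.log (u i) - Real.log (v i)|) i

theorem logDist_le_of_approx (hu : ∀ i, 0 < u i) (hv : ∀ i, 0 < v i) (hδ : 0 ≤ δ)
    (h : Approx δ u v) : logDist u v ≤ δ :=
  Real.iSup_le ((approx_iff_forall_abs_log_sub_le hu hv).1 h) hδ

end LogDist

section Lewis

variable {m n : ℕ} (A : Matrix (Fin m) (Fin n) ℝ)

noncomputable def invGramQuad (d : Fin m → ℝ) : Fin m → ℝ :=
  fun i => A i ⬝ᵥ (Aᵀ * diagonal d * A)⁻¹ *ᵥ A i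

theorem lev_diagonal_mul (d : Fin m → ℝ) (i : Fin m) :
    lev (diagonal d * A) i = d i ^ 2 * invGramQuad A (fun j => d j ^ 2) i := by
  have hgram : (diagonal d * A)ᵀ * (diagonal d * A) = Aᵀ * diagonal (fun j => d j ^ 2) * A := by
    rw [transpose_mul, diagonal_transpose, Matrix.mul_assoc, ← Matrix.mul_assoc (diagonal d),
      diagonal_mul_diagonal, ← Matrix.mul_assoc]
    simp only [sq]
  rw [lev, hgram, invGramQuad]
  set X := (Aᵀ * diagonal (fun j => d j ^ 2) * A)⁻¹
  have hconj :
      diagonal d * A * X * (diagonal d * A)ᵀ = diagonal d * (A * X * Aᵀ) * diagonal d := by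
    simp only [transpose_mul, diagonal_transpose, Matrix.mul_assoc]
  have hentry : (A * X * Aᵀ) i i = A i ⬝ᵥ X *ᵥ A i := by
    simp only [mul_apply, transpose_apply, dotProduct, mulVec, Finset.sum_mul, Finset.mul_sum]
    rw [Finset.sum_comm]
    exact Finset.sum_congr rfl fun j _ => Finset.sum_congr rfl fun k _ => by ring
  rw [hconj, mul_diagonal, diagonal_mul, hentry]
  ring

variable {A}

theorem Approx.invGramQuad (hA : Function.Injective A.mulVec) {δ : ℝ} {d e : Fin m → ℝ}
    (hd : ∀ j, 0 < d j) (he : ∀ j, 0 < e j) (h : Approx δ d e) :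
    Approx δ (invGramQuad A d) (invGramQuad A e) := by
  have hGd := posDef_transpose_mul_diagonal_mul hA hd
  have hGe := posDef_transpose_mul_diagonal_mul hA he
  refine approx_iff_le_exp_mul.2 fun i => ⟨?_, ?_⟩
  · exact hGe.dotProduct_inv_mulVec_le hGd.det_pos.ne'.isUnit (Real.exp_pos δ)
      (dotProduct_transpose_mul_diagonal_mul_mulVec_le A fun j => (approx_iff_le_exp_mul.1 h j).2)
      (A i)
  · exact hGd.dotProduct_inv_mulVec_le hGe.det_pos.ne'.isUnit (Real.exp_pos δ)
      (dotProduct_transpose_mul_diagonal_mul_mulVec_le A fun j => (approx_iff_le_exp_mul.1 h j).1)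
      (A i)

variable (A)

-- With `c = 2/p - 1`, the map iterated in the paper is `w ↦ (lewisMap A z c w)^{p/2}`.
noncomputable def lewisMap (z : Fin m → ℝ) (c : ℝ) (u : Fin m → ℝ) : Fin m → ℝ :=
  fun i => invGramQuad A (fun j => u j ^ (-c)) i + u i ^ c * z i

theorem lev_scaled_add_mul_rpow {u : Fin m → ℝ} (hu : ∀ i, 0 < u i) (p : ℝ)
    (z : Fin m → ℝ) (i : Fin m) :
    (lev (scaled u p A) i + z i) * u i ^ (2/p - 1) = lewisMap A z (2/p - 1) u i := by
  have hsq : ∀ j, (u j ^ ((1:ℝ)/2 - 1/p)) ^ 2 = u j ^ (-(2/p - 1)) := fun j => by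
    rw [← Real.rpow_mul_natCast (hu j).le]
    ring_nf
  rw [scaled, lev_diagonal_mul, lewisMap]
  simp only [hsq, Real.rpow_neg (hu _).le]
  field_simp [(Real.rpow_pos_of_pos (hu i) (2/p - 1)).ne']

variable {A}

theorem approx_lewisMap (hA : Function.Injective A.mulVec) {z : Fin m → ℝ} (hz : ∀ i, 0 ≤ z i)
    (c : ℝ) {δ : ℝ} {u v : Fin m → ℝ} (hu : ∀ i, 0 < u i) (hv : ∀ i, 0 < v i)
    (h : Approx δ u v) : Approx (|c| * δ) (lewisMap A z c u) (lewisMap A z c v) := by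
  have hquad := (h.rpow hu hv (-c)).invGramQuad hA (fun j => Real.rpow_pos_of_pos (hu j) _)
    (fun j => Real.rpow_pos_of_pos (hv j) _)
  rw [abs_neg] at hquad
  exact hquad.add ((h.rpow hu hv c).mul_right hz)

end Lewis

/-- An approximate fixed point of the regularized Lewis weight equation is close
to the exact regularized `ℓ_p` Lewis weights: if
`w ≈_ε σ(diag(w)^{1/2-1/p}A) + z` and `τ` solves `τ = σ(diag(τ)^{1/2-1/p}A) + z`,
then `w ≈_ε τ`. -/
theorem stmt_5 {m n : ℕ} (A : Matrix (Fin m) (Fin n) ℝ)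
    (hrank : A.rank = n)
    (p : ℝ) (hp : p ∈ Set.Ioc (0:ℝ) 2) (ε : ℝ) (hε : 0 < ε)
    (w z : Fin m → ℝ) (hw : ∀ i, 0 < w i) (hz : ∀ i, 0 < z i)
    (hw_apx : Approx ε w (fun i => lev (scaled w p A) i + z i))
    (τ : Fin m → ℝ) (hτpos : ∀ i, 0 < τ i)
    (hτ : ∀ i, τ i = lev (scaled τ p A) i + z i) :
    Approx ε w τ := by
  obtain ⟨hp0, hp2⟩ := hp
  have hc : 0 ≤ 2/p - 1 := by rw [sub_nonneg, le_div_iff₀ hp0]; linarith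
  have hA : Function.Injective A.mulVec :=
    mulVec_injective_of_rank_eq_card (by rwa [Fintype.card_fin])
  have hpow : ∀ u : Fin m → ℝ, (∀ i, 0 < u i) → ∀ i, u i * u i ^ (2/p - 1) = u i ^ (2/p) :=
    fun u hu i => by rw [Real.rpow_sub_one (hu i).ne', mul_div_cancel₀ _ (hu i).ne']
  set δ := logDist w τ
  have hw' : Approx ε (fun i => w i ^ (2/p)) (lewisMap A z (2/p - 1) w) := by
    have := hw_apx.mul_right fun i => (Real.rpow_pos_of_pos (hw i) (2/p - 1)).le
    simpa only [hpow w hw, lev_scaled_add_mul_rpow A hw] using this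
  have hτ' : (fun i => τ i ^ (2/p)) = lewisMap A z (2/p - 1) τ := funext fun i => by
    rw [← lev_scaled_add_mul_rpow A hτpos, ← hτ i, hpow τ hτpos]
  have hcontract := approx_lewisMap hA (fun i => (hz i).le) (2/p - 1) hw hτpos
    (approx_logDist hw hτpos)
  rw [← hτ', abs_of_nonneg hc] at hcontract
  have hstep : Approx ((ε + (2/p - 1) * δ) / (2/p)) w τ :=
    (hw'.trans hcontract).of_rpow hw hτpos (by positivity)
  have hδ : δ ≤ ε := by
    have := logDist_le_of_approx hw hτpos
      (div_nonneg (by nlinarith [logDist_nonneg w τ]) (by positivity)) hstep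
    rw [le_div_iff₀ (by positivity)] at this
    linarith
  exact (approx_logDist hw hτpos).mono (fun i => (hτpos i).le) hδ
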